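/- arXiv:1702.08545 — 2 statements merged into one kernel-verified Lean document; each statement's English description precedes it below -/
import Mathlib

section
/- Soundness of maximality arguments (second variant): Let M be a maxima sequence with indices a ≤ b, and let N₁, …, N_t be maxima sequences with chosen indices b₁, …, b_t, all points of M, N₁, …, N_t being pairwise distinct. Suppose that M(a) dominates N_k(b_k) for every k, and that for every k, either b_k is the last index of N_k or the y-coordinate of N_k(b_k + 1) is strictly less than the y-coordinate of M(b). Then every point M(p) with a ≤ p ≤ b is maximal in the union of the sets of points of M, N₁, …, N_t. -/
/-!
A point `M p` with `a ≤ p ≤ b` cannot be dominated by another point of `M`, since `M` is a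
maxima sequence. In a sequence `N k`, points before `bIdx k` lie strictly left of
`N k (bIdx k)`, hence of `M a` and `M p`, while points after it lie strictly below `M b`,
hence below `M p`. So only `N k (bIdx k)` could dominate `M p`; but it is dominated by `M a`,
which forces `p = a` and then `N k (bIdx k) = M a`, contradicting distinctness.
-/

/-- `p` dominates `q` if `q.1 ≤ p.1` and `q.2 ≤ p.2`. -/
def Dominates (p q : ℝ × ℝ) : Prop := q.1 ≤ p.1 ∧ q.2 ≤ p.2

/-- `p` is a maximal point of the set `S`. -/
def MaximalInSet (S : Set (ℝ × ℝ)) (p : ℝ × ℝ) : Prop :=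
  p ∈ S ∧ ∀ q ∈ S, q ≠ p → ¬ Dominates q p

/-- A maxima sequence: strictly increasing `x`-coordinates and strictly
decreasing `y`-coordinates. -/
def IsMaximaSeq {n : ℕ} (M : Fin n → ℝ × ℝ) : Prop :=
  (StrictMono fun i => (M i).1) ∧ (StrictAnti fun i => (M i).2)

theorem dominates_iff_le {p q : ℝ × ℝ} : Dominates p q ↔ q ≤ p := Iff.rfl

theorem Dominates.trans {p q r : ℝ × ℝ} (hpq : Dominates p q) (hqr : Dominates q r) :
    Dominates p r :=
  dominates_iff_le.2 (le_trans (dominates_iff_le.1 hqr) (dominates_iff_le.1 hpq))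

theorem Dominates.antisymm {p q : ℝ × ℝ} (hpq : Dominates p q) (hqp : Dominates q p) :
    p = q :=
  le_antisymm (dominates_iff_le.1 hqp) (dominates_iff_le.1 hpq)

namespace IsMaximaSeq

variable {n : ℕ} {N : Fin n → ℝ × ℝ}

theorem eq_of_dominates (hN : IsMaximaSeq N) {i j : Fin n} (h : Dominates (N i) (N j)) :
    i = j := by
  rcases lt_trichotomy i j with hij | hij | hij
  · exact absurd h.1 (not_le.2 (hN.1 hij))
  · exact hij
  · exact absurd h.2 (not_le.2 (hN.2 hij))

theorem snd_lt_of_next_snd_lt (hN : IsMaximaSeq N) {c : Fin n} {y : ℝ}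
    (hnext : (c : ℕ) + 1 = n ∨ ∃ h : (c : ℕ) + 1 < n, (N ⟨(c : ℕ) + 1, h⟩).2 < y)
    {j : Fin n} (hcj : c < j) : (N j).2 < y := by
  rcases hnext with hlast | ⟨h, hy⟩
  · have := j.isLt
    omega
  · exact lt_of_le_of_lt (hN.2.antitone (show (⟨(c : ℕ) + 1, h⟩ : Fin n) ≤ j from hcj)) hy

theorem eq_of_dominates_of_fst_le (hN : IsMaximaSeq N) {c j : Fin n} {P : ℝ × ℝ}
    (hx : (N c).1 ≤ P.1) (hy : ∀ j, c < j → (N j).2 < P.2) (h : Dominates (N j) P) :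
    j = c := by
  rcases lt_trichotomy j c with hjc | hjc | hjc
  · exact absurd (hx.trans h.1) (not_le.2 (hN.1 hjc))
  · exact hjc
  · exact absurd h.2 (not_le.2 (hy j hjc))

end IsMaximaSeq

theorem maximality_argument_sound_second_variant_general
    {n t : ℕ} (M : Fin n → ℝ × ℝ) (hM : IsMaximaSeq M)
    (a b : Fin n)
    (nk : Fin t → ℕ) (N : ∀ k : Fin t, Fin (nk k) → ℝ × ℝ)
    (hN : ∀ k, IsMaximaSeq (N k))
    (bIdx : ∀ k : Fin t, Fin (nk k))
    -- all points of `M`, `N₁, …, N_t` are pairwise distinct: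
    (hdist₁ : ∀ (k : Fin t) (i : Fin n) (j : Fin (nk k)), M i ≠ N k j)
    -- `M a` dominates `N k (bIdx k)` for every `k`:
    (hdom : ∀ k, Dominates (M a) (N k (bIdx k)))
    -- for every `k`, either `bIdx k` is the last index of `N k`, or the
    -- `y`-coordinate of the next point is strictly less than that of `M b`:
    (hlast : ∀ k, (bIdx k : ℕ) + 1 = nk k ∨
      ∃ h : (bIdx k : ℕ) + 1 < nk k,
        (N k ⟨(bIdx k : ℕ) + 1, h⟩).2 < (M b).2) :
    ∀ p : Fin n, a ≤ p → p ≤ b →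
      MaximalInSet (Set.range M ∪ ⋃ k, Set.range (N k)) (M p) := by
  intro p hap hpb
  refine ⟨Or.inl ⟨p, rfl⟩, ?_⟩
  rintro q (⟨i, rfl⟩ | hq) hne hdq
  · exact hne (congrArg M (hM.eq_of_dominates hdq))
  obtain ⟨k, j, rfl⟩ : ∃ k j, N k j = q := by simpa only [Set.mem_iUnion, Set.mem_range] using hq
  have hx : (N k (bIdx k)).1 ≤ (M p).1 := (hdom k).1.trans (hM.1.monotone hap)
  have hy : ∀ j, bIdx k < j → (N k j).2 < (M p).2 := fun j hj =>
    lt_of_lt_of_le ((hN k).snd_lt_of_next_snd_lt (hlast k) hj) (hM.2.antitone hpb)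
  obtain rfl := (hN k).eq_of_dominates_of_fst_le hx hy hdq
  obtain rfl : a = p := hM.eq_of_dominates ((hdom k).trans hdq)
  exact hdist₁ k a (bIdx k) ((hdom k).antisymm hdq)

theorem maximality_argument_sound_second_variant
    {n t : ℕ} (M : Fin n → ℝ × ℝ) (hM : IsMaximaSeq M)
    (a b : Fin n) (hab : a ≤ b)
    (nk : Fin t → ℕ) (N : ∀ k : Fin t, Fin (nk k) → ℝ × ℝ)
    (hN : ∀ k, IsMaximaSeq (N k))
    (bIdx : ∀ k : Fin t, Fin (nk k))
    -- all points of `M`, `N₁, …, N_t` are pairwise distinct: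
    (hdist₁ : ∀ (k : Fin t) (i : Fin n) (j : Fin (nk k)), M i ≠ N k j)
    (hdist₂ : ∀ (k k' : Fin t), k ≠ k' →
      ∀ (i : Fin (nk k)) (j : Fin (nk k')), N k i ≠ N k' j)
    -- `M a` dominates `N k (bIdx k)` for every `k`:
    (hdom : ∀ k, Dominates (M a) (N k (bIdx k)))
    -- for every `k`, either `bIdx k` is the last index of `N k`, or the
    -- `y`-coordinate of the next point is strictly less than that of `M b`:
    (hlast : ∀ k, (bIdx k : ℕ) + 1 = nk k ∨
      ∃ h : (bIdx k : ℕ) + 1 < nk k,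
        (N k ⟨(bIdx k : ℕ) + 1, h⟩).2 < (M b).2) :
    ∀ p : Fin n, a ≤ p → p ≤ b →
      MaximalInSet (Set.range M ∪ ⋃ k, Set.range (N k)) (M p) :=
  maximality_argument_sound_second_variant_general M hM a b nk N hN bIdx hdist₁ hdom hlast
end

section
/- Soundness of elementary eliminator arguments: Let u(0), …, u(n−1) be an upper hull sequence, let r, s ∈ ℝ² with r.1 < s.1, let μ = m(r, s), and let d be an index such that (d = 0 or m(u(d−1), u(d)) ≥ μ) and (d = n−1 or μ ≥ m(u(d), u(d+1))). If u(d) lies strictly below the line through r and s, i.e. u(d).2 < r.2 + μ·(u(d).1 − r.1), then every point u(i) of the chain lies strictly below that line: u(i).2 < r.2 + μ·(u(i).1 − r.1) for all i. -/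
/-- The slope of the line through `p` and `q`. -/
noncomputable def slopeOf (p q : ℝ × ℝ) : ℝ := (q.2 - p.2) / (q.1 - p.1)

/-- An upper hull sequence: strictly increasing `x`-coordinates with strictly
decreasing consecutive slopes. -/
def IsUpperHullSeq {n : ℕ} (u : Fin n → ℝ × ℝ) : Prop :=
  (StrictMono fun i => (u i).1) ∧
  ∀ (i : ℕ) (h : i + 2 < n),
    slopeOf (u ⟨i + 1, by omega⟩) (u ⟨i + 2, h⟩) <
      slopeOf (u ⟨i, by omega⟩) (u ⟨i + 1, by omega⟩)

/-- The slope `μ` is "sandwiched" at index `i` of the chain `u`: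
`(i = 0 or m(u(i−1), u(i)) ≥ μ)` and `(i = n−1 or μ ≥ m(u(i), u(i+1)))`. -/
def Sandwiched {n : ℕ} (u : Fin n → ℝ × ℝ) (i : Fin n) (μ : ℝ) : Prop :=
  ((i : ℕ) = 0 ∨
    ∃ _ : 0 < (i : ℕ),
      μ ≤ slopeOf (u ⟨(i : ℕ) - 1, Nat.lt_of_le_of_lt (Nat.sub_le _ _) i.isLt⟩) (u i)) ∧
  ((i : ℕ) = n - 1 ∨
    ∃ h : (i : ℕ) + 1 < n, slopeOf (u i) (u ⟨(i : ℕ) + 1, h⟩) ≤ μ)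


/-!
Measure heights against lines of slope `μ = m(r, s)` by their `y`-intercepts `p.2 - μ * p.1`.
Along an edge of the chain the intercept goes up when the edge is steeper than `μ` and down
when it is flatter. Since the edge slopes decrease, every edge left of `u(d)` is at least as
steep as `μ` and every edge right of it at most as steep, so the intercept along the chain is
largest at `u(d)`, which lies below the line through `r` and `s`.
-/

def yIntercept (μ : ℝ) (p : ℝ × ℝ) : ℝ := p.2 - μ * p.1

lemma slopeOf_le_iff {p q : ℝ × ℝ} {μ : ℝ} (h : p.1 < q.1) :
    slopeOf p q ≤ μ ↔ yIntercept μ q ≤ yIntercept μ p := by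
  rw [slopeOf, div_le_iff₀ (sub_pos.2 h), yIntercept, yIntercept]
  constructor <;> intro <;> linarith

lemma le_slopeOf_iff {p q : ℝ × ℝ} {μ : ℝ} (h : p.1 < q.1) :
    μ ≤ slopeOf p q ↔ yIntercept μ p ≤ yIntercept μ q := by
  rw [slopeOf, le_div_iff₀ (sub_pos.2 h), yIntercept, yIntercept]
  constructor <;> intro <;> linarith

namespace IsUpperHullSeq

variable {n : ℕ} {u : Fin n → ℝ × ℝ}

lemma fst_lt_fst_succ (hu : IsUpperHullSeq u) (i : ℕ) (h : i + 1 < n) :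
    (u ⟨i, by omega⟩).1 < (u ⟨i + 1, h⟩).1 :=
  hu.1 (Fin.mk_lt_mk.2 i.lt_succ_self)

lemma slopeOf_succ_le_of_le (hu : IsUpperHullSeq u) {i j : ℕ} (hij : i ≤ j) (hj : j + 1 < n) :
    slopeOf (u ⟨j, by omega⟩) (u ⟨j + 1, hj⟩) ≤
      slopeOf (u ⟨i, by omega⟩) (u ⟨i + 1, by omega⟩) := by
  induction j, hij using Nat.le_induction with
  | base => rfl
  | succ j _ ih => exact (hu.2 j hj).le.trans (ih (by omega))

lemma yIntercept_le_of_le_of_sandwiched (hu : IsUpperHullSeq u) {d : Fin n} {μ : ℝ}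
    (hd : Sandwiched u d μ) (i : Fin n) (hid : i ≤ d) :
    yIntercept μ (u i) ≤ yIntercept μ (u d) := by
  suffices ∀ j (hj : j < n), (i : ℕ) ≤ j → j ≤ d →
      yIntercept μ (u i) ≤ yIntercept μ (u ⟨j, hj⟩) from this d d.isLt hid le_rfl
  intro j hj hij
  induction j, hij using Nat.le_induction with
  | base => exact fun _ => le_rfl
  | succ j _ ih =>
    intro hjd
    have hd_pred :
        μ ≤ slopeOf (u ⟨d - 1, by omega⟩) (u ⟨d - 1 + 1, by omega⟩) := by
      obtain _ | ⟨_, hμ⟩ := hd.1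
      · omega
      · have hd_eq : (⟨d - 1 + 1, by omega⟩ : Fin n) = d :=
          Fin.ext (Nat.sub_add_cancel (by omega))
        rwa [hd_eq]
    have hμj := hd_pred.trans (hu.slopeOf_succ_le_of_le (i := j) (by omega) _)
    exact (ih (by omega) (by omega)).trans ((le_slopeOf_iff (hu.fst_lt_fst_succ j hj)).1 hμj)

lemma yIntercept_le_of_ge_of_sandwiched (hu : IsUpperHullSeq u) {d : Fin n} {μ : ℝ}
    (hd : Sandwiched u d μ) (i : Fin n) (hdi : d ≤ i) :
    yIntercept μ (u i) ≤ yIntercept μ (u d) := by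
  suffices ∀ j (hj : j < n), (d : ℕ) ≤ j →
      yIntercept μ (u ⟨j, hj⟩) ≤ yIntercept μ (u d) from this i i.isLt hdi
  intro j hj hdj
  induction j, hdj using Nat.le_induction with
  | base => exact le_rfl
  | succ j _ ih =>
    have hd_succ : slopeOf (u d) (u ⟨d + 1, by omega⟩) ≤ μ := by
      obtain _ | ⟨_, hμ⟩ := hd.2
      · omega
      · exact hμ
    have hjμ := (hu.slopeOf_succ_le_of_le (by omega) hj).trans hd_succ
    exact ((slopeOf_le_iff (hu.fst_lt_fst_succ j hj)).1 hjμ).trans (ih (by omega))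

lemma yIntercept_le_of_sandwiched (hu : IsUpperHullSeq u) {d : Fin n} {μ : ℝ}
    (hd : Sandwiched u d μ) (i : Fin n) : yIntercept μ (u i) ≤ yIntercept μ (u d) :=
  (le_total i d).elim (hu.yIntercept_le_of_le_of_sandwiched hd i)
    (hu.yIntercept_le_of_ge_of_sandwiched hd i)

end IsUpperHullSeq

theorem elementary_eliminator_argument_sound_general
    {n : ℕ} (u : Fin n → ℝ × ℝ) (hu : IsUpperHullSeq u)
    (r s : ℝ × ℝ) (d : Fin n)
    (hd : Sandwiched u d (slopeOf r s))
    (hbelow : (u d).2 < r.2 + slopeOf r s * ((u d).1 - r.1)) :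
    ∀ i : Fin n, (u i).2 < r.2 + slopeOf r s * ((u i).1 - r.1) := by
  intro i
  have h := hu.yIntercept_le_of_sandwiched hd i
  rw [yIntercept, yIntercept] at h
  linarith

theorem elementary_eliminator_argument_sound
    {n : ℕ} (u : Fin n → ℝ × ℝ) (hu : IsUpperHullSeq u)
    (r s : ℝ × ℝ) (hrs : r.1 < s.1) (d : Fin n)
    (hd : Sandwiched u d (slopeOf r s))
    (hbelow : (u d).2 < r.2 + slopeOf r s * ((u d).1 - r.1)) :
    ∀ i : Fin n, (u i).2 < r.2 + slopeOf r s * ((u i).1 - r.1) :=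
  elementary_eliminator_argument_sound_general u hu r s d hd hbelow
end
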